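/- Let λ ∈ ℂ with λ ≠ 0 and λ ≠ 1, and let φ be an automorphism of the group G(λ). If (g₁,g₂) is a generating pair of G(λ), then (σ(φ(g₁)), σ(φ(g₂))) equals (σ(g₁), σ(g₂)) or (−σ(g₁), −σ(g₂)), where σ : G(λ) → ℤ is the projection (r,k) ↦ k. -/

import Mathlib

/-! The base `R = {(x, 0)}` of `R ⋊_u ℤ` is an abelian normal subgroup, hence so is its image
under an automorphism `φ`. An element `g` of height `k = σ g` that commutes with its conjugate by
`(1, 0)` satisfies `(1 - u^k)^2 = 0`, so every element of `φ(R)` has a height `k` with `u^k = 1`.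
On the other hand `x ↦ σ (φ (x, 0))` is additive and, since `σ ∘ φ` is a class function,
invariant under `x ↦ u x`; if `u^n = 1 ≠ u` in a domain, then `1 + u + ⋯ + u^(n-1) = 0` and
summing over the orbit gives `n · σ (φ (x, 0)) = 0`. Thus `σ ∘ φ` kills the base and equals
`c · σ`; doing the same for `φ⁻¹` gives `c = ±1`. -/

/-- The semidirect product `R ⋊_u ℤ`: underlying set `R × ℤ` with multiplication
`(r, k) · (r', k') = (r + u^k · r', k + k')`, where `u` is a unit of the commutative ring
`R`. -/
def SDP (R : Type*) [CommRing R] (u : Rˣ) : Type _ := R × ℤ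

namespace SDP

variable {R : Type*} [CommRing R] {u : Rˣ}

instance : Mul (SDP R u) := ⟨fun g h => (g.1 + ((u ^ g.2 : Rˣ) : R) * h.1, g.2 + h.2)⟩
instance : One (SDP R u) := ⟨((0 : R), (0 : ℤ))⟩
instance : Inv (SDP R u) := ⟨fun g => (-(((u ^ (-g.2) : Rˣ) : R) * g.1), -g.2)⟩

theorem mul_def (g h : SDP R u) :
    g * h = (g.1 + ((u ^ g.2 : Rˣ) : R) * h.1, g.2 + h.2) := rfl
theorem one_def : (1 : SDP R u) = ((0 : R), (0 : ℤ)) := rfl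
theorem inv_def (g : SDP R u) : g⁻¹ = (-(((u ^ (-g.2) : Rˣ) : R) * g.1), -g.2) := rfl

instance instGroup : Group (SDP R u) where
  mul_assoc a b c := by
    rw [mul_def, mul_def, mul_def, mul_def]
    refine Prod.ext ?_ ?_
    · show (a.1 + ↑(u ^ a.2) * b.1) + ↑(u ^ (a.2 + b.2)) * c.1
        = a.1 + ↑(u ^ a.2) * (b.1 + ↑(u ^ b.2) * c.1)
      rw [zpow_add]; push_cast; ring
    · show (a.2 + b.2) + c.2 = a.2 + (b.2 + c.2); omega
  one_mul a := by
    rw [mul_def]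
    refine Prod.ext ?_ ?_
    · show (0 : R) + ↑(u ^ (0 : ℤ)) * a.1 = a.1; simp
    · show (0 : ℤ) + a.2 = a.2; omega
  mul_one a := by
    rw [mul_def]
    refine Prod.ext ?_ ?_
    · show a.1 + ↑(u ^ a.2) * (0 : R) = a.1; simp
    · show a.2 + (0 : ℤ) = a.2; omega
  inv_mul_cancel a := by
    rw [mul_def]
    refine Prod.ext ?_ ?_
    · show -(↑(u ^ (-a.2)) * a.1) + ↑(u ^ (-a.2)) * a.1 = (0 : R); simp
    · show -a.2 + a.2 = (0 : ℤ); omega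

end SDP
/-- `R_λ = ℤ[λ, λ⁻¹]`, the smallest subring of `ℂ` containing `λ` and `λ⁻¹`. -/
def Rring (l : ℂ) : Subring ℂ := Subring.closure {l, l⁻¹}

/-- `λ` as a unit of `R_λ` (for `λ ≠ 0`). -/
noncomputable def Runit (l : ℂ) (hl : l ≠ 0) : (Rring l)ˣ where
  val := ⟨l, Subring.subset_closure (by simp)⟩
  inv := ⟨l⁻¹, Subring.subset_closure (by simp)⟩
  val_inv := Subtype.ext (mul_inv_cancel₀ hl)
  inv_val := Subtype.ext (inv_mul_cancel₀ hl)

/-- `G(λ) = R_λ ⋊ ℤ`, where the generator `1 ∈ ℤ` acts by multiplication by `λ`: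
the set `R_λ × ℤ` with multiplication `(r, k) · (r', k') = (r + λ^k r', k + k')`. -/
noncomputable def Gl (l : ℂ) (hl : l ≠ 0) : Type := SDP (Rring l) (Runit l hl)

noncomputable instance (l : ℂ) (hl : l ≠ 0) : Group (Gl l hl) :=
  inferInstanceAs (Group (SDP (Rring l) (Runit l hl)))

namespace SDP

variable {R : Type*} [CommRing R] {u : Rˣ}

@[simp] lemma fst_mul (g h : SDP R u) : (g * h).1 = g.1 + ((u ^ g.2 : Rˣ) : R) * h.1 := rfl
@[simp] lemma snd_mul (g h : SDP R u) : (g * h).2 = g.2 + h.2 := rfl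
@[simp] lemma fst_inv (g : SDP R u) : g⁻¹.1 = -(((u ^ (-g.2) : Rˣ) : R) * g.1) := rfl
@[simp] lemma snd_inv (g : SDP R u) : g⁻¹.2 = -g.2 := rfl
@[simp] lemma fst_one : (1 : SDP R u).1 = 0 := rfl
@[simp] lemma snd_one : (1 : SDP R u).2 = 0 := rfl

@[ext] lemma ext {g h : SDP R u} (h₁ : g.1 = h.1) (h₂ : g.2 = h.2) : g = h := Prod.ext h₁ h₂

lemma snd_zpow (g : SDP R u) (k : ℤ) : (g ^ k).2 = k * g.2 := by
  induction k using Int.induction_on with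
  | zero => simp
  | succ k ih => rw [zpow_add_one, snd_mul, ih]; ring
  | pred k ih => rw [zpow_sub_one, snd_mul, snd_inv, ih]; ring

variable (u) in
def inl (x : R) : SDP R u := (x, 0)

variable (R u) in
def gen : SDP R u := (0, 1)

@[simp] lemma fst_inl (x : R) : (inl u x).1 = x := rfl
@[simp] lemma snd_inl (x : R) : (inl u x).2 = 0 := rfl
@[simp] lemma fst_gen : (gen R u).1 = 0 := rfl
@[simp] lemma snd_gen : (gen R u).2 = 1 := rfl

lemma inl_add (x y : R) : inl u (x + y) = inl u x * inl u y := by ext <;> simp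

lemma inl_zero : inl u (0 : R) = 1 := rfl

@[simp] lemma fst_gen_zpow (k : ℤ) : (gen R u ^ k).1 = 0 := by
  induction k using Int.induction_on with
  | zero => simp
  | succ k ih => rw [zpow_add_one, fst_mul, ih, fst_gen, mul_zero, add_zero]
  | pred k ih => rw [zpow_sub_one, fst_mul, ih, fst_inv, fst_gen]; simp

lemma inl_mul_gen_zpow (g : SDP R u) : inl u g.1 * gen R u ^ g.2 = g := by
  ext <;> simp [snd_zpow]

lemma gen_mul_inl_mul_gen_inv (x : R) : gen R u * inl u x * (gen R u)⁻¹ = inl u (u * x) := by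
  ext <;> simp

lemma commute_of_snd_eq_zero {g h : SDP R u} (hg : g.2 = 0) (hh : h.2 = 0) : Commute g h := by
  ext <;> simp [hg, hh, add_comm]

lemma zpow_snd_eq_one_of_commute [IsReduced R] {g : SDP R u}
    (hg : Commute (inl u 1 * g * (inl u 1)⁻¹) g) : u ^ g.2 = 1 := by
  have h := congrArg Prod.fst hg.eq
  simp only [fst_mul, fst_inv, fst_inl, snd_mul, snd_inv, snd_inl, neg_zero, add_zero, zero_add,
    zpow_zero, Units.val_one, one_mul, mul_one] at h
  have hsq : ((1 : R) - ↑(u ^ g.2)) ^ 2 = 0 := by linear_combination h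
  exact Units.val_eq_one.mp (sub_eq_zero.mp (sq_eq_zero_iff.mp hsq)).symm

section Hom

variable {S : Type*} [CommRing S] {v : Sˣ} {F : Type*} [FunLike F (SDP R u) (SDP S v)]
  [MonoidHomClass F (SDP R u) (SDP S v)]

def sndCompInl (φ : F) : R →+ ℤ where
  toFun x := (φ (inl u x)).2
  map_zero' := by rw [inl_zero, map_one]; rfl
  map_add' x y := by rw [inl_add, map_mul, snd_mul]

lemma sndCompInl_apply (φ : F) (x : R) : sndCompInl φ x = (φ (inl u x)).2 := rfl

lemma sndCompInl_unit_mul (φ : F) (x : R) : sndCompInl φ (u * x) = sndCompInl φ x := by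
  rw [sndCompInl_apply, sndCompInl_apply, ← gen_mul_inl_mul_gen_inv, map_mul, map_mul, map_inv,
    snd_mul, snd_mul, snd_inv]
  ring

lemma sndCompInl_unit_pow_mul (φ : F) (n : ℕ) (x : R) :
    sndCompInl φ ((u : R) ^ n * x) = sndCompInl φ x := by
  induction n with
  | zero => rw [pow_zero, one_mul]
  | succ n ih => rw [pow_succ', mul_assoc, sndCompInl_unit_mul, ih]

lemma sndCompInl_eq_zero_of_pow_eq_one [IsDomain R] (φ : F) (hu : u ≠ 1) {n : ℕ}
    (hn : u ^ n = 1) (hn0 : n ≠ 0) (x : R) : sndCompInl φ x = 0 := by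
  have hgeom : ∑ i ∈ Finset.range n, (u : R) ^ i = 0 := by
    have h := geom_sum_mul (u : R) n
    rw [← Units.val_pow_eq_pow_val, hn, Units.val_one, sub_self] at h
    exact (mul_eq_zero.mp h).resolve_right (sub_ne_zero.mpr (Units.val_eq_one.not.mpr hu))
  have hsmul : n • sndCompInl φ x = 0 :=
    calc n • sndCompInl φ x = ∑ i ∈ Finset.range n, sndCompInl φ ((u : R) ^ i * x) := by
          simp [sndCompInl_unit_pow_mul]
      _ = sndCompInl φ ((∑ i ∈ Finset.range n, (u : R) ^ i) * x) := by
          rw [Finset.sum_mul, map_sum]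
      _ = 0 := by rw [hgeom, zero_mul, map_zero]
  exact (smul_eq_zero.mp hsmul).resolve_left hn0

end Hom

lemma snd_map_inl [IsDomain R] (hu : u ≠ 1) (φ : SDP R u ≃* SDP R u) (x : R) :
    (φ (inl u x)).2 = 0 := by
  set g := φ (inl u x)
  have hcomm : Commute (inl u 1 * g * (inl u 1)⁻¹) g := by
    obtain ⟨b, hb⟩ := φ.surjective (inl u 1)
    rw [← hb, ← map_inv, ← map_mul, ← map_mul]
    exact (commute_of_snd_eq_zero (by simp) (by simp)).map φ
  have hk : u ^ g.2.natAbs = 1 := pow_natAbs_eq_one.mpr (zpow_snd_eq_one_of_commute hcomm)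
  by_contra hg
  exact hg (sndCompInl_eq_zero_of_pow_eq_one φ hu hk (Int.natAbs_ne_zero.mpr hg) x)

lemma snd_map_eq_mul [IsDomain R] (hu : u ≠ 1) (φ : SDP R u ≃* SDP R u) (g : SDP R u) :
    (φ g).2 = (φ (gen R u)).2 * g.2 := by
  conv_lhs => rw [← inl_mul_gen_zpow g]
  rw [map_mul, map_zpow, snd_mul, snd_map_inl hu, snd_zpow]
  ring

lemma snd_map_eq_or_eq_neg [IsDomain R] (hu : u ≠ 1) (φ : SDP R u ≃* SDP R u) :
    (∀ g, (φ g).2 = g.2) ∨ ∀ g, (φ g).2 = -g.2 := by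
  have h : (φ (gen R u)).2 * (φ.symm (gen R u)).2 = 1 := by
    rw [mul_comm, ← snd_map_eq_mul hu φ.symm, φ.symm_apply_apply, snd_gen]
  rcases Int.eq_one_or_neg_one_of_mul_eq_one h with hc | hc
  · exact Or.inl fun g => by rw [snd_map_eq_mul hu φ, hc, one_mul]
  · exact Or.inr fun g => by rw [snd_map_eq_mul hu φ, hc, neg_one_mul]

end SDP

theorem sigma_automorphism_generating_pair_general
    (l : ℂ) (hl : l ≠ 0) (hl1 : l ≠ 1) (φ : Gl l hl ≃* Gl l hl)
    (g₁ g₂ : Gl l hl) :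
    ((φ g₁).2, (φ g₂).2) = (g₁.2, g₂.2) ∨ ((φ g₁).2, (φ g₂).2) = (-g₁.2, -g₂.2) := by
  have hu : Runit l hl ≠ 1 := fun h =>
    hl1 (congrArg (fun w : (Rring l)ˣ => ((w : Rring l) : ℂ)) h)
  exact (SDP.snd_map_eq_or_eq_neg hu φ).imp (fun h => Prod.ext (h g₁) (h g₂))
    (fun h => Prod.ext (h g₁) (h g₂))

/-- Let `λ ∈ ℂ` with `λ ≠ 0, 1` and let `φ` be an automorphism of `G(λ)`.  If `(g₁, g₂)` is
a generating pair of `G(λ)`, then `(σ (φ g₁), σ (φ g₂))` equals `(σ g₁, σ g₂)` or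
`(-σ g₁, -σ g₂)`, where `σ : G(λ) → ℤ` is the projection `(r, k) ↦ k`. -/
theorem sigma_automorphism_generating_pair
    (l : ℂ) (hl : l ≠ 0) (hl1 : l ≠ 1) (φ : Gl l hl ≃* Gl l hl)
    (g₁ g₂ : Gl l hl)
    (hg : Subgroup.closure ({g₁, g₂} : Set (Gl l hl)) = ⊤) :
    ((φ g₁).2, (φ g₂).2) = (g₁.2, g₂.2) ∨ ((φ g₁).2, (φ g₂).2) = (-g₁.2, -g₂.2) :=
  sigma_automorphism_generating_pair_general l hl hl1 φ g₁ g₂
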